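/- arXiv:1807.10389 — 6 statements merged into one kernel-verified Lean document; each statement's English description precedes it below -/
import Mathlib

section
/- In the group G = ⟨a, b ; a^m = 1, b^n = 1, b⁻¹ab = a^k⟩ with gcd(m, k-1) = 1 and n the multiplicative order of k mod m, for all i, r ∈ ℤ_m and j, s ∈ ℤ_n, the commutator [a^i b^j, a^r b^s] equals a^N where N ≡ i·k^j·(k^s - 1) - r·k^s·(k^j - 1) (mod m). -/
/-- Relations for the presentation
`⟨a, b ; a^m = 1, b^n = 1, b⁻¹ab = a^k⟩`, where `a` is `FreeGroup.of true`
and `b` is `FreeGroup.of false`. -/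
def mcRels (m n k : ℕ) : Set (FreeGroup Bool) :=
  {FreeGroup.of true ^ m, FreeGroup.of false ^ n,
    (FreeGroup.of false)⁻¹ * FreeGroup.of true * FreeGroup.of false *
      (FreeGroup.of true ^ k)⁻¹}

/-- The metacyclic group `G(m,n,k) = ⟨a, b ; a^m = 1, b^n = 1, b⁻¹ab = a^k⟩`. -/
def McGroup (m n k : ℕ) := PresentedGroup (mcRels m n k)

instance (m n k : ℕ) : Group (McGroup m n k) := by
  unfold McGroup; infer_instance

/-- The generator `a` of `G(m,n,k)`. -/
def McGroup.a (m n k : ℕ) : McGroup m n k := PresentedGroup.of true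

/-- The generator `b` of `G(m,n,k)`. -/
def McGroup.b (m n k : ℕ) : McGroup m n k := PresentedGroup.of false

/-- `n = ind_m(k)`: `n` is the least positive integer with `k^n ≡ 1 (mod m)`. -/
def IsIndex (m k n : ℕ) : Prop :=
  0 < n ∧ k ^ n ≡ 1 [MOD m] ∧ ∀ d : ℕ, 0 < d → k ^ d ≡ 1 [MOD m] → n ≤ d

/-!
The relation `b⁻¹ a b = a ^ k` moves powers of `a` past powers of `b`: `a ^ t * b ^ j = b ^ j * a ^ (t * k ^ j)`.
Hence `x = a ^ i * b ^ j` and `y = a ^ r * b ^ s` satisfy `x * y = b ^ (j + s) * a ^ u` and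
`y * x = b ^ (j + s) * a ^ v`, so `[x, y] = (y * x)⁻¹ * (x * y) = a ^ (u - v)` with `u - v` the stated exponent,
already over `ℤ`; `a ^ m = 1` then lets the exponent be read modulo `m`.
-/

section Metacyclic

variable {G : Type*} [Group G] {a b : G} {k : ℤ}

theorem zpow_mul_pow_eq_pow_mul_zpow (h : b⁻¹ * a * b = a ^ k) (t : ℤ) (j : ℕ) :
    a ^ t * b ^ j = b ^ j * a ^ (t * k ^ j) := by
  induction j with
  | zero => simp
  | succ j ih =>
    have hconj : (b⁻¹ * a * b) ^ (t * k ^ j) = b⁻¹ * a ^ (t * k ^ j) * b := by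
      simpa using conj_zpow (a := b⁻¹) (b := a) (i := t * k ^ j)
    rw [h, ← zpow_mul, mul_comm k, mul_assoc, ← pow_succ] at hconj
    calc a ^ t * b ^ (j + 1) = b ^ j * (a ^ (t * k ^ j) * b) := by
          rw [pow_succ, ← mul_assoc, ih, mul_assoc]
      _ = b ^ (j + 1) * a ^ (t * k ^ (j + 1)) := by
          rw [hconj, pow_succ]; group

theorem zpow_mul_pow_mul_zpow_mul_pow_eq (h : b⁻¹ * a * b = a ^ k)
    (t u : ℤ) (j s : ℕ) :
    a ^ t * b ^ j * (a ^ u * b ^ s) = b ^ (j + s) * a ^ (t * k ^ (j + s) + u * k ^ s) := by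
  rw [zpow_mul_pow_eq_pow_mul_zpow h u, ← mul_assoc, mul_assoc (a ^ t), ← pow_add,
    zpow_mul_pow_eq_pow_mul_zpow h, mul_assoc, ← zpow_add]

theorem metacyclic_commutator_eq_zpow (h : b⁻¹ * a * b = a ^ k)
    (i r : ℤ) (j s : ℕ) :
    (a ^ i * b ^ j)⁻¹ * (a ^ r * b ^ s)⁻¹ * (a ^ i * b ^ j) * (a ^ r * b ^ s) =
      a ^ (i * k ^ j * (k ^ s - 1) - r * k ^ s * (k ^ j - 1)) := by
  have hxy := zpow_mul_pow_mul_zpow_mul_pow_eq h i r j s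
  have hyx := zpow_mul_pow_mul_zpow_mul_pow_eq h r i s j
  rw [add_comm s j] at hyx
  calc (a ^ i * b ^ j)⁻¹ * (a ^ r * b ^ s)⁻¹ * (a ^ i * b ^ j) * (a ^ r * b ^ s)
      = (a ^ r * b ^ s * (a ^ i * b ^ j))⁻¹ * (a ^ i * b ^ j * (a ^ r * b ^ s)) := by group
    _ = a ^ (-(r * k ^ (j + s) + i * k ^ j) + (i * k ^ (j + s) + r * k ^ s)) := by
        rw [hxy, hyx, mul_inv_rev, mul_assoc, inv_mul_cancel_left, ← zpow_neg, ← zpow_add]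
    _ = a ^ (i * k ^ j * (k ^ s - 1) - r * k ^ s * (k ^ j - 1)) := by congr 1; ring

end Metacyclic

theorem zpow_eq_zpow_of_intCast_eq {G : Type*} [Group G] {a : G} {m : ℕ} (ha : a ^ m = 1)
    {x y : ℤ} (h : (x : ZMod m) = y) : a ^ x = a ^ y :=
  zpow_eq_zpow_iff_modEq.2 <|
    ((ZMod.intCast_eq_intCast_iff _ _ _).1 h).of_dvd (mod_cast orderOf_dvd_of_pow_eq_one ha)

namespace McGroup

variable {m n k : ℕ}

theorem mk_eq_one_of_mem_mcRels {x : FreeGroup Bool} (hx : x ∈ mcRels m n k) :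
    PresentedGroup.mk (mcRels m n k) x = 1 :=
  (QuotientGroup.eq_one_iff x).2 (Subgroup.subset_normalClosure hx)

theorem a_pow_m : a m n k ^ m = 1 := by
  have := mk_eq_one_of_mem_mcRels (m := m) (n := n) (k := k) (Or.inl rfl)
  rw [map_pow] at this
  exact this

theorem inv_b_mul_a_mul_b : (b m n k)⁻¹ * a m n k * b m n k = a m n k ^ (k : ℤ) := by
  have := mk_eq_one_of_mem_mcRels (m := m) (n := n) (k := k) (Or.inr (Or.inr rfl))
  simp only [map_mul, map_inv, map_pow, mul_inv_eq_one] at this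
  rw [zpow_natCast]
  exact this

end McGroup

theorem stmt_1_general (m n k : ℕ)
    (i r j s : ℕ) (N : ℤ)
    (hN : (N : ZMod m) =
      (i : ZMod m) * (k : ZMod m) ^ j * ((k : ZMod m) ^ s - 1) -
        (r : ZMod m) * (k : ZMod m) ^ s * ((k : ZMod m) ^ j - 1)) :
    (McGroup.a m n k ^ i * McGroup.b m n k ^ j)⁻¹ *
        (McGroup.a m n k ^ r * McGroup.b m n k ^ s)⁻¹ *
        (McGroup.a m n k ^ i * McGroup.b m n k ^ j) *
        (McGroup.a m n k ^ r * McGroup.b m n k ^ s) =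
      McGroup.a m n k ^ N := by
  rw [← zpow_natCast _ i, ← zpow_natCast _ r,
    metacyclic_commutator_eq_zpow McGroup.inv_b_mul_a_mul_b]
  refine zpow_eq_zpow_of_intCast_eq McGroup.a_pow_m ?_
  rw [hN]
  push_cast
  ring

/-- in `G(m,n,k)` with `gcd(m,k-1) = 1` and `n = ind_m(k)`,
the commutator `[a^i b^j, a^r b^s]` equals `a^N` whenever
`N ≡ i·k^j·(k^s - 1) - r·k^s·(k^j - 1) (mod m)`. -/
theorem stmt_1 (m n k : ℕ) (hm : 0 < m) (hk : 0 < k)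
    (hcop : Nat.gcd m (k - 1) = 1) (hind : IsIndex m k n)
    (i r j s : ℕ) (N : ℤ)
    (hN : (N : ZMod m) =
      (i : ZMod m) * (k : ZMod m) ^ j * ((k : ZMod m) ^ s - 1) -
        (r : ZMod m) * (k : ZMod m) ^ s * ((k : ZMod m) ^ j - 1)) :
    (McGroup.a m n k ^ i * McGroup.b m n k ^ j)⁻¹ *
        (McGroup.a m n k ^ r * McGroup.b m n k ^ s)⁻¹ *
        (McGroup.a m n k ^ i * McGroup.b m n k ^ j) *
        (McGroup.a m n k ^ r * McGroup.b m n k ^ s) =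
      McGroup.a m n k ^ N :=
  stmt_1_general m n k i r j s N hN
end

section
/- Let G = ⟨a, b ; a^m = 1, b^n = a^l, b⁻¹ab = a^k⟩ with k^n ≡ 1 (mod m) and l(k-1) ≡ 0 (mod m). Then G has trivial centre if and only if gcd(m, k-1) = 1 and n is the multiplicative order of k modulo m. -/
/-- Relations for the Hölder presentation
`⟨a, b ; a^m = 1, b^n = a^l, b⁻¹ab = a^k⟩`, with `a = FreeGroup.of true`,
`b = FreeGroup.of false`. -/
def holderRels (m n k l : ℕ) : Set (FreeGroup Bool) :=
  {FreeGroup.of true ^ m,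
    FreeGroup.of false ^ n * (FreeGroup.of true ^ l)⁻¹,
    (FreeGroup.of false)⁻¹ * FreeGroup.of true * FreeGroup.of false *
      (FreeGroup.of true ^ k)⁻¹}

/-- The group `⟨a, b ; a^m = 1, b^n = a^l, b⁻¹ab = a^k⟩`. -/
def HolderGroup (m n k l : ℕ) := PresentedGroup (holderRels m n k l)

instance (m n k l : ℕ) : Group (HolderGroup m n k l) := by
  unfold HolderGroup; infer_instance

/-!
Writing elements as `b ^ i * a ^ x`, the group is the quotient of `ℤ/m ⋊ ℤ` (with `ℤ` acting
through multiplication by `k`) by the cyclic subgroup generated by the relator `b ^ n * a ^ (-l)`,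
which is central because `k ^ n ≡ 1` and `k * l ≡ l`. This subgroup meets the kernel of the
projection to `ℤ` trivially, and commutators lie in that kernel, so the quotient has trivial centre
exactly when every central element of `ℤ/m ⋊ ℤ` is a power of the relator. The central elements
are the `(x, i)` with `(k - 1) * x = 0` and `k ^ i = 1`; they are all powers of the relator iff
`k - 1` is a unit mod `m` and `k` has order exactly `n`.
-/

theorem MulEquiv.center_eq_bot_iff {G H : Type*} [Group G] [Group H] (e : G ≃* H) :
    Subgroup.center G = ⊥ ↔ Subgroup.center H = ⊥ := by
  rw [← not_iff_not, ← ne_eq, ← ne_eq, ← Subgroup.nontrivial_iff_ne_bot,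
    ← Subgroup.nontrivial_iff_ne_bot]
  exact (Subgroup.centerCongr e).toEquiv.nontrivial_congr

theorem Subgroup.normalClosure_singleton_eq_zpowers {G : Type*} [Group G] {c : G}
    (hc : c ∈ center G) : normalClosure {c} = zpowers c := by
  have : (zpowers c).Normal := ⟨fun x hx g => by
    rw [mem_center_iff.mp (zpowers_le.mpr hc hx) g, mul_inv_cancel_right]
    exact hx⟩
  exact le_antisymm (normalClosure_le_normal (by simp)) (zpowers_le.mpr (subset_normalClosure rfl))

theorem center_quotient_eq_bot_iff {G A : Type*} [Group G] [CommGroup A] {N : Subgroup G}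
    [N.Normal] (f : G →* A) (hf : N ⊓ f.ker = ⊥) :
    Subgroup.center (G ⧸ N) = ⊥ ↔ Subgroup.center G ≤ N := by
  constructor
  · intro hbot g hg
    have : (g : G ⧸ N) ∈ Subgroup.center (G ⧸ N) := by
      rw [Subgroup.mem_center_iff]
      rintro ⟨h⟩
      exact congrArg _ (Subgroup.mem_center_iff.mp hg h)
    rwa [hbot, Subgroup.mem_bot, QuotientGroup.eq_one_iff] at this
  · intro hle
    rw [Subgroup.eq_bot_iff_forall]
    rintro ⟨g⟩ hg
    refine (QuotientGroup.eq_one_iff g).mpr (hle (Subgroup.mem_center_iff.mpr fun h => ?_))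
    have hN : (h * g)⁻¹ * (g * h) ∈ N := QuotientGroup.eq.mp (Subgroup.mem_center_iff.mp hg h)
    have hker : (h * g)⁻¹ * (g * h) ∈ f.ker := by
      simp only [MonoidHom.mem_ker, map_mul, map_inv]
      exact inv_mul_eq_one.mpr (mul_comm _ _)
    have := hf ▸ Subgroup.mem_inf.mpr ⟨hN, hker⟩
    exact inv_mul_eq_one.mp this

theorem Units.smul_eq_self_iff {R : Type*} [Ring R] {u : Rˣ} {x : R} :
    u • x = x ↔ ((u : R) - 1) * x = 0 := by
  rw [Units.smul_def, _root_.smul_eq_mul, sub_mul, one_mul, sub_eq_zero]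

/-- `R ⋊ ℤ`, with `⟨x, i⟩` standing for `b ^ i * a ^ x` where `b⁻¹ * a ^ x * b = a ^ (u • x)`;
hence `⟨x, i⟩ * ⟨y, j⟩ = b ^ (i + j) * (b ^ (-j) * a ^ x * b ^ j) * a ^ y`. -/
@[ext]
structure IntSemidirect (R : Type*) [Ring R] (u : Rˣ) where
  x : R
  i : ℤ

namespace IntSemidirect

variable {R : Type*} [Ring R] {u : Rˣ}

instance : Mul (IntSemidirect R u) := ⟨fun g h => ⟨u ^ h.i • g.x + h.x, g.i + h.i⟩⟩
instance : One (IntSemidirect R u) := ⟨⟨0, 0⟩⟩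
instance : Inv (IntSemidirect R u) := ⟨fun g => ⟨-(u ^ (-g.i) • g.x), -g.i⟩⟩

@[simp] theorem mul_x (g h : IntSemidirect R u) : (g * h).x = u ^ h.i • g.x + h.x := rfl
@[simp] theorem mul_i (g h : IntSemidirect R u) : (g * h).i = g.i + h.i := rfl
@[simp] theorem one_x : (1 : IntSemidirect R u).x = 0 := rfl
@[simp] theorem one_i : (1 : IntSemidirect R u).i = 0 := rfl
@[simp] theorem inv_x (g : IntSemidirect R u) : g⁻¹.x = -(u ^ (-g.i) • g.x) := rfl
@[simp] theorem inv_i (g : IntSemidirect R u) : g⁻¹.i = -g.i := rfl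

instance : Group (IntSemidirect R u) where
  mul_assoc g h k := by ext <;> simp [zpow_add, mul_smul, smul_add, add_comm h.i, add_assoc]
  one_mul g := by ext <;> simp
  mul_one g := by ext <;> simp
  inv_mul_cancel g := by ext <;> simp [← mul_smul]

def deg : IntSemidirect R u →* Multiplicative ℤ where
  toFun g := .ofAdd g.i
  map_one' := rfl
  map_mul' _ _ := rfl

theorem zpow_i (g : IntSemidirect R u) (t : ℤ) : (g ^ t).i = t * g.i := by
  simpa [deg, mul_comm] using congrArg Multiplicative.toAdd (map_zpow deg g t)

theorem zpowers_inf_ker_deg {c : IntSemidirect R u} (hc : c.i ≠ 0) :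
    Subgroup.zpowers c ⊓ deg.ker = ⊥ := by
  rw [Subgroup.eq_bot_iff_forall]
  rintro _ ⟨⟨t, rfl⟩, hker⟩
  have ht : t * c.i = 0 := by simpa [deg, zpow_i] using hker
  simp [(mul_eq_zero.mp ht).resolve_right hc]

theorem mk_zero_one_zpow (i : ℤ) : (⟨0, 1⟩ : IntSemidirect R u) ^ i = ⟨0, i⟩ := by
  induction i using Int.induction_on with
  | zero => rfl
  | succ j ih => rw [zpow_add_one, ih]; ext <;> simp
  | pred j ih => rw [zpow_sub_one, ih]; ext <;> simp [sub_eq_add_neg]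

theorem mk_zero_pow (x : R) (s : ℕ) : (⟨x, 0⟩ : IntSemidirect R u) ^ s = ⟨s • x, 0⟩ := by
  induction s with
  | zero => ext <;> simp
  | succ s ih => rw [pow_succ, ih]; ext <;> simp [add_smul]

theorem mk_zero_one_zpow_mul_mk_one_zero_pow (i : ℤ) (s : ℕ) :
    (⟨0, 1⟩ : IntSemidirect R u) ^ i * (⟨1, 0⟩ : IntSemidirect R u) ^ s = ⟨s, i⟩ := by
  rw [mk_zero_one_zpow, mk_zero_pow]
  ext <;> simp

theorem mem_center_iff {g : IntSemidirect R u} :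
    g ∈ Subgroup.center (IntSemidirect R u) ↔ u • g.x = g.x ∧ u ^ g.i = 1 := by
  rw [Subgroup.mem_center_iff]
  refine ⟨fun h => ⟨?_, ?_⟩, fun ⟨hx, hi⟩ h => ?_⟩
  · simpa using (congrArg IntSemidirect.x (h ⟨0, 1⟩)).symm
  · have h1 := congrArg IntSemidirect.x (h ⟨1, 0⟩)
    simp only [mul_x, zpow_zero, one_smul, Units.smul_def] at h1
    exact Units.ext (by simpa [add_comm] using h1)
  · have : u ^ h.i • g.x = g.x := Subgroup.zpow_mem (MulAction.stabilizer Rˣ g.x) hx h.i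
    ext <;> simp [hi, this, add_comm]

end IntSemidirect

theorem IntSemidirect.center_le_zpowers_iff {R : Type*} [CommRing R] [Finite R] {u : Rˣ} {r : R} {n : ℕ}
    (hn : 0 < n) (hun : u ^ n = 1) (hur : u • r = r) :
    Subgroup.center (IntSemidirect R u) ≤ Subgroup.zpowers ⟨r, n⟩ ↔
      IsUnit ((u : R) - 1) ∧ orderOf u = n := by
  simp only [SetLike.le_def, mem_center_iff]
  constructor
  · intro h
    refine ⟨isUnit_iff_mem_nonZeroDivisors_of_finite.mpr
      (mem_nonZeroDivisors_iff_left.mpr fun x hx => ?_), ?_⟩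
    · have hx0 := h (x := ⟨x, 0⟩) ⟨Units.smul_eq_self_iff.mpr hx, zpow_zero u⟩
      have := zpowers_inf_ker_deg (c := ⟨r, n⟩) (by simpa using hn.ne') ▸
        Subgroup.mem_inf.mpr ⟨hx0, MonoidHom.mem_ker.mpr rfl⟩
      exact congrArg IntSemidirect.x (Subgroup.mem_bot.mp this)
    · obtain ⟨t, ht⟩ := h (x := ⟨0, orderOf u⟩) ⟨smul_zero u, by simp [pow_orderOf_eq_one]⟩
      have hi := congrArg IntSemidirect.i ht
      rw [zpow_i] at hi
      refine Nat.dvd_antisymm (orderOf_dvd_of_pow_eq_one hun) (Int.natCast_dvd_natCast.mp ?_)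
      exact ⟨t, by simpa [mul_comm] using hi.symm⟩
  · rintro ⟨hunit, hord⟩ g ⟨hgx, hgi⟩
    have hr : r = 0 := hunit.mul_right_eq_zero.mp (Units.smul_eq_self_iff.mp hur)
    have hx : g.x = 0 := hunit.mul_right_eq_zero.mp (Units.smul_eq_self_iff.mp hgx)
    obtain ⟨t, ht⟩ := orderOf_dvd_iff_zpow_eq_one.mpr hgi
    refine ⟨t, show (⟨r, (n : ℤ)⟩ : IntSemidirect R u) ^ t = g from ?_⟩
    rw [hr, ← mk_zero_one_zpow, ← zpow_mul, mk_zero_one_zpow]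
    ext <;> simp [hx, ht, hord]

section ZModPow

variable {G : Type*} [Group G] {m k : ℕ} {A B : G}

theorem pow_val_eq_pow [NeZero m] (hA : A ^ m = 1) {x : ZMod m} {s : ℕ}
    (hs : (s : ZMod m) = x) : A ^ x.val = A ^ s := by
  subst hs
  rw [ZMod.val_natCast]
  conv_rhs => rw [← Nat.mod_add_div s m, pow_add, pow_mul, hA, one_pow, mul_one]

variable [NeZero m] {u : (ZMod m)ˣ} (hA : A ^ m = 1) (hAB : B⁻¹ * A * B = A ^ k)
  (hu : (u : ZMod m) = k)
include hA hAB hu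

theorem inv_mul_pow_val_mul (x : ZMod m) : B⁻¹ * A ^ x.val * B = A ^ (u • x).val := by
  have hconj := map_pow (MulAut.conj B⁻¹) A x.val
  simp only [MulAut.conj_apply, inv_inv] at hconj
  rw [hconj, hAB, ← pow_mul, pow_val_eq_pow hA]
  simp [Units.smul_def, hu]

theorem zpow_neg_mul_pow_val_mul_zpow (j : ℤ) (x : ZMod m) :
    B ^ (-j) * A ^ x.val * B ^ j = A ^ (u ^ j • x).val := by
  induction j using Int.induction_on generalizing x with
  | zero => simp
  | succ j ih =>
    calc B ^ (-(j + 1 : ℤ)) * A ^ x.val * B ^ (j + 1 : ℤ)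
        = B⁻¹ * (B ^ (-(j : ℤ)) * A ^ x.val * B ^ (j : ℤ)) * B := by group
      _ = A ^ (u ^ (j + 1 : ℤ) • x).val := by
        rw [ih, inv_mul_pow_val_mul hA hAB hu, add_comm, zpow_one_add, mul_smul]
  | pred j ih =>
    have hy := inv_mul_pow_val_mul hA hAB hu (u ^ (-(j : ℤ) - 1) • x)
    rw [← mul_smul, ← zpow_one_add, add_sub_cancel] at hy
    calc B ^ (-(-(j : ℤ) - 1)) * A ^ x.val * B ^ (-(j : ℤ) - 1)
        = B * (B ^ (-(-(j : ℤ))) * A ^ x.val * B ^ (-(j : ℤ))) * B⁻¹ := by group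
      _ = A ^ (u ^ (-(j : ℤ) - 1) • x).val := by
        rw [ih, ← hy]
        group

end ZModPow

namespace IntSemidirect

variable {G : Type*} [Group G] {m k : ℕ} [NeZero m] {A B : G} {u : (ZMod m)ˣ}

def lift (hA : A ^ m = 1) (hAB : B⁻¹ * A * B = A ^ k) (hu : (u : ZMod m) = k) :
    IntSemidirect (ZMod m) u →* G :=
  MonoidHom.mk' (fun g => B ^ g.i * A ^ g.x.val) fun g h => by
    have hsplit : A ^ (u ^ h.i • g.x + h.x).val = A ^ (u ^ h.i • g.x).val * A ^ h.x.val := by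
      rw [← pow_add, pow_val_eq_pow hA (s := (u ^ h.i • g.x).val + h.x.val) (by simp)]
    simp only [mul_x, mul_i, hsplit, ← zpow_neg_mul_pow_val_mul_zpow hA hAB hu]
    group

theorem lift_apply (hA : A ^ m = 1) (hAB : B⁻¹ * A * B = A ^ k) (hu : (u : ZMod m) = k)
    (g : IntSemidirect (ZMod m) u) : lift hA hAB hu g = B ^ g.i * A ^ g.x.val := rfl

end IntSemidirect

namespace HolderGroup

open IntSemidirect

variable {m n k l : ℕ}

def a : HolderGroup m n k l := PresentedGroup.of true
def b : HolderGroup m n k l := PresentedGroup.of false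

theorem a_pow : (a : HolderGroup m n k l) ^ m = 1 := by
  have := PresentedGroup.one_of_mem (rels := holderRels m n k l) (Set.mem_insert _ _)
  simp only [map_pow] at this
  exact this

theorem b_pow : (b : HolderGroup m n k l) ^ n = a ^ l := by
  have := PresentedGroup.one_of_mem (rels := holderRels m n k l)
    (Set.mem_insert_of_mem _ (Set.mem_insert _ _))
  simp only [map_mul, map_inv, map_pow, mul_inv_eq_one] at this
  exact this

theorem b_inv_mul_a_mul_b : (b : HolderGroup m n k l)⁻¹ * a * b = a ^ k := by
  have := PresentedGroup.one_of_mem (rels := holderRels m n k l)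
    (Set.mem_insert_of_mem _ (Set.mem_insert_of_mem _ rfl))
  simp only [map_mul, map_inv, map_pow, mul_inv_eq_one] at this
  exact this

section Lift

variable {H : Type*} [Group H] {α β : H}

def lift (hα : α ^ m = 1) (hβ : β ^ n = α ^ l) (hαβ : β⁻¹ * α * β = α ^ k) :
    HolderGroup m n k l →* H :=
  PresentedGroup.toGroup (f := fun t => cond t α β) <| by
    simp only [holderRels, Set.mem_insert_iff, Set.mem_singleton_iff, forall_eq_or_imp, forall_eq]
    simp [hα, hβ, hαβ]

theorem lift_a (hα : α ^ m = 1) (hβ : β ^ n = α ^ l) (hαβ : β⁻¹ * α * β = α ^ k) :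
    lift hα hβ hαβ a = α :=
  PresentedGroup.toGroup.of _

theorem lift_b (hα : α ^ m = 1) (hβ : β ^ n = α ^ l) (hαβ : β⁻¹ * α * β = α ^ k) :
    lift hα hβ hαβ b = β :=
  PresentedGroup.toGroup.of _

theorem hom_ext {f g : HolderGroup m n k l →* H} (ha : f a = g a) (hb : f b = g b) : f = g :=
  PresentedGroup.ext fun t => by cases t; exacts [hb, ha]

end Lift

variable {u : (ZMod m)ˣ}

/-- `⟨-l, n⟩` is the relator `b ^ n * a ^ (-l)`. -/
abbrev Model (m n l : ℕ) (u : (ZMod m)ˣ) :=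
  IntSemidirect (ZMod m) u ⧸ Subgroup.normalClosure {(⟨-l, n⟩ : IntSemidirect (ZMod m) u)}

theorem model_relator : ((⟨-l, n⟩ : IntSemidirect (ZMod m) u) : Model m n l u) = 1 :=
  (QuotientGroup.eq_one_iff _).mpr (Subgroup.subset_normalClosure rfl)

theorem model_a_pow : ((⟨1, 0⟩ : IntSemidirect (ZMod m) u) : Model m n l u) ^ m = 1 := by
  rw [← QuotientGroup.mk_pow, mk_zero_pow, nsmul_eq_mul, mul_one, ZMod.natCast_self]
  rfl

theorem model_b_pow : ((⟨0, 1⟩ : IntSemidirect (ZMod m) u) : Model m n l u) ^ n =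
    (⟨1, 0⟩ : IntSemidirect _ u) ^ l := by
  have : (⟨0, 1⟩ : IntSemidirect (ZMod m) u) ^ n = ⟨-l, n⟩ * ⟨1, 0⟩ ^ l := by
    rw [← zpow_natCast, mk_zero_one_zpow, mk_zero_pow]
    ext <;> simp
  rw [← QuotientGroup.mk_pow, this, QuotientGroup.mk_mul, model_relator, one_mul,
    QuotientGroup.mk_pow]

theorem model_b_inv_mul_a_mul_b (hu : (u : ZMod m) = k) :
    ((⟨0, 1⟩ : IntSemidirect (ZMod m) u) : Model m n l u)⁻¹ * (⟨1, 0⟩ : IntSemidirect _ u) *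
      (⟨0, 1⟩ : IntSemidirect _ u) = (⟨1, 0⟩ : IntSemidirect _ u) ^ k := by
  have : (⟨0, 1⟩ : IntSemidirect (ZMod m) u)⁻¹ * ⟨1, 0⟩ * ⟨0, 1⟩ = ⟨1, 0⟩ ^ k := by
    rw [mk_zero_pow]
    ext <;> simp [Units.smul_def, hu]
  rw [← QuotientGroup.mk_inv, ← QuotientGroup.mk_mul, ← QuotientGroup.mk_mul, this,
    QuotientGroup.mk_pow]

noncomputable def toModel (hu : (u : ZMod m) = k) : HolderGroup m n k l →* Model m n l u :=
  lift model_a_pow model_b_pow (model_b_inv_mul_a_mul_b hu)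

noncomputable def ofModel [NeZero m] (hu : (u : ZMod m) = k) :
    Model m n l u →* HolderGroup m n k l :=
  QuotientGroup.lift _ (IntSemidirect.lift a_pow b_inv_mul_a_mul_b hu) <|
    Subgroup.normalClosure_le_normal <| by
      rintro _ rfl
      rw [SetLike.mem_coe, MonoidHom.mem_ker, lift_apply, zpow_natCast, b_pow, ← pow_add,
        ← pow_val_eq_pow a_pow (x := 0) (by simp), ZMod.val_zero, pow_zero]

theorem ofModel_mk [NeZero m] (hu : (u : ZMod m) = k) (g : IntSemidirect (ZMod m) u) :
    ofModel (n := n) (l := l) hu g = b ^ g.i * a ^ g.x.val :=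
  rfl

noncomputable def equivModel [NeZero m] (hu : (u : ZMod m) = k) :
    HolderGroup m n k l ≃* Model m n l u :=
  MonoidHom.toMulEquiv (toModel hu) (ofModel hu)
    (hom_ext (by simp [toModel, lift_a, ofModel_mk, pow_val_eq_pow a_pow (s := 1)])
      (by simp [toModel, lift_b, ofModel_mk]))
    (QuotientGroup.monoidHom_ext _ <| MonoidHom.ext fun g => by
      simp [toModel, ofModel_mk, lift_a, lift_b, ← QuotientGroup.mk_pow, ← QuotientGroup.mk_zpow,
        ← QuotientGroup.mk_mul, mk_zero_one_zpow_mul_mk_one_zero_pow])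

end HolderGroup

theorem isIndex_iff_orderOf_eq {m k n : ℕ} {u : (ZMod m)ˣ} (hu : (u : ZMod m) = k)
    (hn : 0 < n) : IsIndex m k n ↔ orderOf u = n := by
  have key (d : ℕ) : k ^ d ≡ 1 [MOD m] ↔ u ^ d = 1 := by
    rw [← ZMod.natCast_eq_natCast_iff, Units.ext_iff]
    push_cast [hu]
    rfl
  simp only [IsIndex, key, orderOf_eq_iff hn, hn, true_and]
  refine and_congr_right fun _ => ⟨fun h d hdn hd hud => ?_, fun h d hd hud => ?_⟩
  · exact absurd (h d hd hud) (not_le.mpr hdn)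
  · exact not_lt.mp fun hdn => h d hdn hd hud

theorem gcd_sub_one_eq_one_iff_isUnit {m k : ℕ} (hk : 0 < k) :
    Nat.gcd m (k - 1) = 1 ↔ IsUnit ((k : ZMod m) - 1) := by
  rw [← Nat.cast_one (R := ZMod m), ← Nat.cast_sub hk, ZMod.isUnit_iff_coprime, Nat.coprime_comm]

theorem stmt_2_general (m n k l : ℕ) (hm : 0 < m) (hn : 0 < n) (hk : 0 < k)
    (h1 : k ^ n ≡ 1 [MOD m]) (h2 : l * (k - 1) ≡ 0 [MOD m]) :
    Subgroup.center (HolderGroup m n k l) = ⊥ ↔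
      Nat.gcd m (k - 1) = 1 ∧ IsIndex m k n := by
  have : NeZero m := ⟨hm.ne'⟩
  have hkn : (k : ZMod m) ^ n = 1 := by
    simpa using (ZMod.natCast_eq_natCast_iff _ _ _).mpr h1
  obtain ⟨u, hu⟩ := IsUnit.of_pow_eq_one hkn hn.ne'
  have hun : u ^ n = 1 := Units.ext (by simp [hu, hkn])
  have hul : u • (-l : ZMod m) = -l := by
    have := (ZMod.natCast_eq_natCast_iff _ _ _).mpr h2
    push_cast [Nat.cast_sub hk] at this
    rw [Units.smul_eq_self_iff, hu]
    linear_combination -this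
  have hc : (⟨-l, n⟩ : IntSemidirect (ZMod m) u) ∈ Subgroup.center _ :=
    IntSemidirect.mem_center_iff.mpr ⟨hul, by simpa using hun⟩
  have hdeg := IntSemidirect.zpowers_inf_ker_deg (c := (⟨-l, n⟩ : IntSemidirect (ZMod m) u))
    (by simpa using hn.ne')
  rw [← Subgroup.normalClosure_singleton_eq_zpowers hc] at hdeg
  rw [(HolderGroup.equivModel hu).center_eq_bot_iff,
    center_quotient_eq_bot_iff IntSemidirect.deg hdeg,
    Subgroup.normalClosure_singleton_eq_zpowers hc, IntSemidirect.center_le_zpowers_iff hn hun hul,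
    gcd_sub_one_eq_one_iff_isUnit hk, isIndex_iff_orderOf_eq hu hn, hu]

/-- `G = ⟨a, b ; a^m = 1, b^n = a^l, b⁻¹ab = a^k⟩` with
`k^n ≡ 1 (mod m)` and `l(k-1) ≡ 0 (mod m)` has trivial centre iff
`gcd(m, k-1) = 1` and `n` is the multiplicative order of `k` mod `m`. -/
theorem stmt_2 (m n k l : ℕ) (hm : 0 < m) (hn : 0 < n) (hk : 0 < k)
    (hl : 0 < l) (h1 : k ^ n ≡ 1 [MOD m]) (h2 : l * (k - 1) ≡ 0 [MOD m]) :
    Subgroup.center (HolderGroup m n k l) = ⊥ ↔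
      Nat.gcd m (k - 1) = 1 ∧ IsIndex m k n :=
  stmt_2_general m n k l hm hn hk h1 h2
end

section
/- For G = G(m,n,k) with trivial centre and x₁, x₂, y₁, y₂ ∈ ℤ_m, the containers C(x₁,y₁) and C(x₂,y₂) have nonempty intersection if and only if x₁ ≡ x₂ (mod m). -/
/-- The mu-map `μ(x,y)` of `G = G(m,n,k)`, acting on elements of `G` written in
the normal form `a^i b^j` (identified with pairs `(i,j) ∈ ℤ_m × ℤ_n`):
`(a^i b^j) μ(x,y) = a^N` with `N ≡ x·i·k^j − y·(k^j − 1) (mod m)`. -/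
def Mu (m n k : ℕ) (x y : ZMod m) : Function.End (ZMod m × ZMod n) :=
  fun p => (x * p.1 * (k : ZMod m) ^ p.2.val -
    y * ((k : ZMod m) ^ p.2.val - 1), 0)

/-- The container `C(x,y) = {μ(x, yz) : z ∈ ℤ_m}`. -/
def Container (m n k : ℕ) (x y : ZMod m) :
    Set (Function.End (ZMod m × ZMod n)) :=
  {f | ∃ z : ZMod m, f = Mu m n k x (y * z)}

-- `(1, 0)` is the generator `a`, so this says `a μ(x,y) = a^x`: the map determines `x`.
theorem Mu_apply_one_zero {m n k : ℕ} (x y : ZMod m) : Mu m n k x y (1, 0) = (x, 0) := by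
  simp [Mu, ZMod.val_zero]

theorem eq_of_Mu_eq {m n k : ℕ} {x₁ x₂ y₁ y₂ : ZMod m}
    (h : Mu m n k x₁ y₁ = Mu m n k x₂ y₂) : x₁ = x₂ := by
  simpa only [Mu_apply_one_zero, Prod.mk.injEq, and_true] using congrFun h (1, 0)

theorem Mu_zero_mem_Container {m n k : ℕ} (x y : ZMod m) : Mu m n k x 0 ∈ Container m n k x y :=
  ⟨0, by rw [mul_zero]⟩

theorem stmt_7_general (m n k : ℕ)
    (x₁ x₂ y₁ y₂ : ZMod m) :
    (Container m n k x₁ y₁ ∩ Container m n k x₂ y₂).Nonempty ↔ x₁ = x₂ := by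
  constructor
  · rintro ⟨_, ⟨_, rfl⟩, _, h⟩
    exact eq_of_Mu_eq h
  · rintro rfl
    exact ⟨_, Mu_zero_mem_Container x₁ y₁, Mu_zero_mem_Container x₁ y₂⟩

/-- two containers `C(x₁,y₁)` and `C(x₂,y₂)` intersect iff
`x₁ ≡ x₂ (mod m)`. -/
theorem stmt_7 (m n k : ℕ) (hm : 0 < m) (hk : 0 < k)
    (hcop : Nat.gcd m (k - 1) = 1) (hind : IsIndex m k n)
    (x₁ x₂ y₁ y₂ : ZMod m) :
    (Container m n k x₁ y₁ ∩ Container m n k x₂ y₂).Nonempty ↔ x₁ = x₂ :=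
  stmt_7_general m n k x₁ x₂ y₁ y₂
end

section
/- For G = G(m,n,k) with trivial centre, x, y ∈ ℤ_m, and z₁, z₂ ∈ ℤ_m: μ(x, y·z₁) = μ(x, y·z₂) as maps G → G if and only if z₁ ≡ z₂ (mod m/gcd(m,y)). -/
/-!
Evaluating `μ(x, w)` at `b = (0, 1)` gives `-w (k - 1)`, and `k - 1` is a unit mod `m`, so
`w ↦ μ(x, w)` is injective; `b` has `j = 1` because `ind_m(k) > 1`, as `k ≢ 1 (mod m)`.
The claim thus reduces to `y z₁ ≡ y z₂ (mod m)`, i.e. `z₁ ≡ z₂ (mod m / gcd(m, y))`.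
-/
theorem Nat.modEq_mul_left_iff_modEq_div_gcd {m a b : ℕ} (c : ℕ) (hm : 0 < m) :
    c * a ≡ c * b [MOD m] ↔ a ≡ b [MOD m / m.gcd c] := by
  refine ⟨Nat.ModEq.cancel_left_div_gcd hm, fun h ↦ (h.mul_left' c).of_dvd ?_⟩
  rw [← Nat.mul_div_assoc c (Nat.gcd_dvd_left m c), mul_comm,
    Nat.mul_div_assoc m (Nat.gcd_dvd_right m c)]
  exact dvd_mul_right _ _

theorem ZMod.mul_left_eq_mul_left_iff_modEq {m : ℕ} [NeZero m] (y z₁ z₂ : ZMod m) :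
    y * z₁ = y * z₂ ↔ z₁.val ≡ z₂.val [MOD m / m.gcd y.val] := by
  rw [← Nat.modEq_mul_left_iff_modEq_div_gcd _ (NeZero.pos m), ← ZMod.natCast_eq_natCast_iff]
  simp only [Nat.cast_mul, ZMod.natCast_val, ZMod.cast_id', id]

theorem ZMod.isUnit_natCast_sub_one {m k : ℕ} (h : m.Coprime (k - 1)) :
    IsUnit ((k : ZMod m) - 1) := by
  rcases k with _ | k
  · rw [Nat.zero_sub, Nat.coprime_zero_right] at h
    subst h
    exact isUnit_of_subsingleton _
  · simpa using (ZMod.unitOfCoprime k h.symm).isUnit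

theorem IsIndex.one_lt {m k n : ℕ} (hind : IsIndex m k n) (hcop : m.Coprime (k - 1))
    (hm : m ≠ 1) : 1 < n := by
  obtain ⟨hn, hpow, -⟩ := hind
  refine lt_of_le_of_ne hn fun h ↦ hm ?_
  subst h
  have hk : (k : ZMod m) - 1 = 0 := by
    rw [sub_eq_zero, ← Nat.cast_one, ZMod.natCast_eq_natCast_iff]
    simpa using hpow
  have := ZMod.isUnit_natCast_sub_one hcop
  rw [hk, isUnit_zero_iff] at this
  exact ZMod.subsingleton_iff.mp (subsingleton_of_zero_eq_one this)

theorem mu_apply_zero_one_fst {m n : ℕ} (k : ℕ) (hn : 1 < n) (x w : ZMod m) :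
    (Mu m n k x w (0, 1)).1 = -(w * ((k : ZMod m) - 1)) := by
  have : Fact (1 < n) := ⟨hn⟩
  simp [Mu, ZMod.val_one]

theorem mu_inj {m n k : ℕ} (hcop : m.Coprime (k - 1)) (hind : IsIndex m k n)
    {x w₁ w₂ : ZMod m} : Mu m n k x w₁ = Mu m n k x w₂ ↔ w₁ = w₂ := by
  refine ⟨fun h ↦ ?_, congrArg _⟩
  rcases subsingleton_or_nontrivial (ZMod m) with _ | hnt
  · exact Subsingleton.elim _ _
  have hn := hind.one_lt hcop (ZMod.nontrivial_iff.mp hnt)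
  have h01 := congrArg Prod.fst (congrFun h (0, 1))
  rw [mu_apply_zero_one_fst k hn, mu_apply_zero_one_fst k hn, neg_inj] at h01
  exact (ZMod.isUnit_natCast_sub_one hcop).mul_right_cancel h01

theorem stmt_8_general (m n k : ℕ) (hm : 0 < m)
    (hcop : Nat.gcd m (k - 1) = 1) (hind : IsIndex m k n)
    (x y z₁ z₂ : ZMod m) :
    Mu m n k x (y * z₁) = Mu m n k x (y * z₂) ↔
      z₁.val ≡ z₂.val [MOD m / Nat.gcd m y.val] := by
  have : NeZero m := ⟨hm.ne'⟩
  rw [mu_inj hcop hind, ZMod.mul_left_eq_mul_left_iff_modEq]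

/-- `μ(x, y·z₁) = μ(x, y·z₂)` iff `z₁ ≡ z₂ (mod m/gcd(m,y))`. -/
theorem stmt_8 (m n k : ℕ) (hm : 0 < m) (hk : 0 < k)
    (hcop : Nat.gcd m (k - 1) = 1) (hind : IsIndex m k n)
    (x y z₁ z₂ : ZMod m) :
    Mu m n k x (y * z₁) = Mu m n k x (y * z₂) ↔
      z₁.val ≡ z₂.val [MOD m / Nat.gcd m y.val] :=
  stmt_8_general m n k hm hcop hind x y z₁ z₂
end

section
/- For G = G(m,n,k) with trivial centre and x, y ∈ ℤ_m, the container C(x,y) = {μ(x, yz) : z ∈ ℤ_m} has exactly m/gcd(m,y) elements. -/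
/-!
The container is the image of the ideal `y ℤ_m` under `z ↦ μ(x, z)`. This map is injective:
evaluating `μ(x, z)` at `b` gives `a^{-z(k - 1)}`, and `k - 1` is a unit mod `m`
(if `n = 1`, then `k ≡ 1` forces `m = 1`). So `C(x,y)` has
as many elements as `y ℤ_m = ⟨y⟩`, namely the additive order `m / gcd(m, y)` of `y`.
-/

namespace ZMod

variable {m : ℕ}

theorem range_mul_left_eq_zmultiples (y : ZMod m) :
    Set.range (y * ·) = AddSubgroup.zmultiples y := by
  ext b
  simp only [Set.mem_range, SetLike.mem_coe, AddSubgroup.mem_zmultiples_iff, zsmul_eq_mul]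
  constructor
  · rintro ⟨z, rfl⟩
    exact ⟨z.cast, by rw [ZMod.intCast_zmod_cast, mul_comm]⟩
  · rintro ⟨c, rfl⟩
    exact ⟨c, mul_comm _ _⟩

theorem ncard_range_mul_left [NeZero m] (y : ZMod m) :
    (Set.range (y * ·)).ncard = m / m.gcd y.val := by
  rw [range_mul_left_eq_zmultiples, ← Nat.card_coe_set_eq, SetLike.coe_sort_coe,
    Nat.card_zmultiples]
  simpa only [ZMod.natCast_zmod_val] using ZMod.addOrderOf_coe y.val (NeZero.ne m)

theorem isUnit_natCast_sub_one_s9 {k : ℕ} (hk : 0 < k) (hcop : m.gcd (k - 1) = 1) :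
    IsUnit ((k : ZMod m) - 1) := by
  have := (ZMod.isUnit_iff_coprime (k - 1) m).mpr (Nat.coprime_comm.mp hcop)
  rwa [Nat.cast_sub hk, Nat.cast_one] at this

end ZMod

section Mu

variable {m n k : ℕ}

theorem IsIndex.one_lt_s9 [Nontrivial (ZMod m)] (hind : IsIndex m k n)
    (hu : IsUnit ((k : ZMod m) - 1)) : 1 < n := by
  obtain ⟨hn, hkn, -⟩ := hind
  refine lt_of_le_of_ne hn fun h1 => not_isUnit_zero (M₀ := ZMod m) ?_
  subst h1
  have hk1 : (k : ZMod m) = 1 := by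
    simpa using (ZMod.natCast_eq_natCast_iff _ _ _).mpr hkn
  rwa [hk1, sub_self] at hu

theorem mu_injective_of_one_lt (hn : 1 < n) (hu : IsUnit ((k : ZMod m) - 1)) (x : ZMod m) :
    Function.Injective (Mu m n k x) := by
  have : Fact (1 < n) := ⟨hn⟩
  intro y y' h
  have hb := congrArg Prod.fst (congrFun h (0, 1))
  simp only [Mu, ZMod.val_one, pow_one, mul_zero, zero_mul, zero_sub, neg_inj] at hb
  exact hu.mul_right_cancel hb

theorem mu_injective (hind : IsIndex m k n) (hu : IsUnit ((k : ZMod m) - 1)) (x : ZMod m) :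
    Function.Injective (Mu m n k x) := by
  rcases subsingleton_or_nontrivial (ZMod m) with _ | _
  · exact fun _ _ _ => Subsingleton.elim _ _
  · exact mu_injective_of_one_lt (hind.one_lt_s9 hu) hu x

theorem container_eq_image (x y : ZMod m) :
    Container m n k x y = Mu m n k x '' Set.range (y * ·) := by
  ext f
  simp only [Container, Set.mem_ofPred_eq, Set.mem_image, Set.exists_range_iff, eq_comm]

end Mu

/-- the container `C(x,y)` has exactly `m / gcd(m,y)` elements. -/
theorem stmt_9 (m n k : ℕ) (hm : 0 < m) (hk : 0 < k)
    (hcop : Nat.gcd m (k - 1) = 1) (hind : IsIndex m k n)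
    (x y : ZMod m) :
    (Container m n k x y).ncard = m / Nat.gcd m y.val := by
  have : NeZero m := ⟨hm.ne'⟩
  rw [container_eq_image, Set.ncard_image_of_injective _
    (mu_injective hind (ZMod.isUnit_natCast_sub_one_s9 hk hcop) x), ZMod.ncard_range_mul_left]
end

section
/- For G = G(m,n,k) with trivial centre and S ⊆ ℤ_m a base, the subsemigroup Σ_G(S) of M(G) generated by Γ_μ(S) = {μ(s,z) : s ∈ S, z ∈ ℤ_m} equals Γ_μ(S) ∪ Π_μ(S), where Π_μ(S) = {μ(s·s*, s*·z) : s ∈ S, s* ∈ S*, z ∈ ℤ_m} and S* is the multiplicative closure of S in ℤ_m. -/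
/-- The multiplicative closure `S*` of `S` in `ℤ_m`. -/
def mulClosure (m : ℕ) (S : Set (ZMod m)) : Set (ZMod m) :=
  Subsemigroup.closure S

/-- `S ⊆ ℤ_m` is a base if it contains `0` and at least one unit of `ℤ_m`. -/
def IsBase (m : ℕ) (S : Set (ZMod m)) : Prop :=
  (0 : ZMod m) ∈ S ∧ ∃ u ∈ S, IsUnit u

/-- The set `Γ_μ(S) = {μ(s,z) : s ∈ S, z ∈ ℤ_m}` of mu-generators. -/
def GammaMu (m n k : ℕ) (S : Set (ZMod m)) :
    Set (Function.End (ZMod m × ZMod n)) :=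
  {f | ∃ s ∈ S, ∃ z : ZMod m, f = Mu m n k s z}

/-- The set `Π_μ(S) = {μ(s·s*, s*·z) : s ∈ S, s* ∈ S*, z ∈ ℤ_m}` of
mu-products. -/
def PiMu (m n k : ℕ) (S : Set (ZMod m)) :
    Set (Function.End (ZMod m × ZMod n)) :=
  {f | ∃ s ∈ S, ∃ t ∈ mulClosure m S, ∃ z : ZMod m,
    f = Mu m n k (s * t) (t * z)}

/-- The `G`-semigroup `Σ_G(S)`: the subsemigroup of `M(G)` (under composition)
generated by `Γ_μ(S)`. -/
def SigmaG (m n k : ℕ) (S : Set (ZMod m)) :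
    Set (Function.End (ZMod m × ZMod n)) :=
  Subsemigroup.closure (GammaMu m n k S)

/-! Composition of mu-maps is `μ(a,b) * μ(c,d) = μ(ac, ad)`, so a product of generators
`μ(s₁,z₁) ⋯ μ(sᵣ,zᵣ)` equals `μ(sᵣ·t, t·zᵣ)` with `t = s₁ ⋯ sᵣ₋₁ ∈ S*`; this gives
`Σ_G(S) ⊆ Γ_μ(S) ∪ Π_μ(S)`. Conversely `μ(s·t, t·z) = μ(t,0) * μ(s,z)`, and `t ↦ μ(t,0)` is
multiplicative, so it sends `S* = ⟨S⟩` into the semigroup generated by the `μ(s,0)`, `s ∈ S`. -/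

section MuMaps

variable {m n k : ℕ}

theorem mu_mul_mu (a b c d : ZMod m) :
    Mu m n k a b * Mu m n k c d = Mu m n k (a * c) (a * d) := by
  funext p
  show Mu m n k a b (Mu m n k c d p) = _
  have hval : (0 : ZMod n).val = 0 := ZMod.val_zero
  simp only [Mu, hval, pow_zero]
  refine Prod.ext ?_ rfl
  ring

def muZeroHom (m n k : ℕ) : ZMod m →ₙ* Function.End (ZMod m × ZMod n) where
  toFun t := Mu m n k t 0
  map_mul' a b := by rw [mu_mul_mu, mul_zero]

variable {S : Set (ZMod m)}

theorem mem_mulClosure_of_mem {s : ZMod m} (hs : s ∈ S) : s ∈ mulClosure m S :=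
  Subsemigroup.subset_closure hs

theorem mul_mem_mulClosure {a b : ZMod m} (ha : a ∈ mulClosure m S)
    (hb : b ∈ mulClosure m S) : a * b ∈ mulClosure m S :=
  Subsemigroup.mul_mem _ ha hb

theorem exists_eq_mu_of_mem_gammaMu_union_piMu {f : Function.End (ZMod m × ZMod n)}
    (hf : f ∈ GammaMu m n k S ∪ PiMu m n k S) :
    ∃ x ∈ mulClosure m S, ∃ y, f = Mu m n k x y := by
  rcases hf with ⟨s, hs, z, rfl⟩ | ⟨s, hs, t, ht, z, rfl⟩
  · exact ⟨s, mem_mulClosure_of_mem hs, z, rfl⟩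
  · exact ⟨s * t, mul_mem_mulClosure (mem_mulClosure_of_mem hs) ht, t * z, rfl⟩

theorem mu_mul_mem_piMu {x y : ZMod m} (hx : x ∈ mulClosure m S)
    {g : Function.End (ZMod m × ZMod n)} (hg : g ∈ GammaMu m n k S ∪ PiMu m n k S) :
    Mu m n k x y * g ∈ PiMu m n k S := by
  rcases hg with ⟨s, hs, z, rfl⟩ | ⟨s, hs, t, ht, z, rfl⟩
  · refine ⟨s, hs, x, hx, z, ?_⟩
    rw [mu_mul_mu, mul_comm x s]
  · refine ⟨s, hs, x * t, mul_mem_mulClosure hx ht, z, ?_⟩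
    rw [mu_mul_mu]
    congr 1 <;> ring

theorem sigmaG_subset_gammaMu_union_piMu :
    SigmaG m n k S ⊆ GammaMu m n k S ∪ PiMu m n k S := by
  intro f hf
  refine Subsemigroup.closure_induction (fun g hg => Or.inl hg) ?_ hf
  rintro f g _ _ hf hg
  obtain ⟨x, hx, y, rfl⟩ := exists_eq_mu_of_mem_gammaMu_union_piMu hf
  exact Or.inr (mu_mul_mem_piMu hx hg)

theorem gammaMu_subset_sigmaG : GammaMu m n k S ⊆ SigmaG m n k S :=
  Subsemigroup.subset_closure

theorem mu_zero_mem_sigmaG {t : ZMod m} (ht : t ∈ mulClosure m S) :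
    Mu m n k t 0 ∈ SigmaG m n k S := by
  have hmap := Subsemigroup.mem_map_of_mem (muZeroHom m n k) (S := Subsemigroup.closure S) ht
  rw [MulHom.map_mclosure] at hmap
  refine Subsemigroup.closure_mono ?_ hmap
  rintro _ ⟨s, hs, rfl⟩
  exact ⟨s, hs, 0, rfl⟩

theorem piMu_subset_sigmaG : PiMu m n k S ⊆ SigmaG m n k S := by
  rintro _ ⟨s, hs, t, ht, z, rfl⟩
  have hfactor : Mu m n k (s * t) (t * z) = Mu m n k t 0 * Mu m n k s z := by
    rw [mu_mul_mu, mul_comm s t]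
  rw [hfactor]
  exact Subsemigroup.mul_mem _ (mu_zero_mem_sigmaG ht) (gammaMu_subset_sigmaG ⟨s, hs, z, rfl⟩)

end MuMaps

theorem stmt_12_general (m n k : ℕ) (S : Set (ZMod m)) :
    SigmaG m n k S = GammaMu m n k S ∪ PiMu m n k S :=
  sigmaG_subset_gammaMu_union_piMu.antisymm
    (Set.union_subset gammaMu_subset_sigmaG piMu_subset_sigmaG)

/-- for `S` a base, `Σ_G(S) = Γ_μ(S) ∪ Π_μ(S)`. -/
theorem stmt_12 (m n k : ℕ) (hm : 0 < m) (hk : 0 < k)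
    (hcop : Nat.gcd m (k - 1) = 1) (hind : IsIndex m k n)
    (S : Set (ZMod m)) (hS : IsBase m S) :
    SigmaG m n k S = GammaMu m n k S ∪ PiMu m n k S :=
  stmt_12_general m n k S
end
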